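/- Let O = {o1, o2, o3, o4} with A = {a1, a2}, and define the rule φ that assigns a1 her most-preferred object and assigns a2 her most-preferred object among the two objects least-preferred by a1. Then φ is strategy-proof. -/

import Mathlib

open Classical

/-- A rule is strategy-proof. (Larger in the linear order means more preferred.) -/
def StrategyProof {A O : Type*} [DecidableEq A] (φ : (A → LinearOrder O) → A → O) : Prop :=
  ∀ (P : A → LinearOrder O) (a : A) (Q : LinearOrder O),
    (P a).le (φ (Function.update P a Q) a) (φ P a)

/-- The maximum of `s` under the linear order `L` (an arbitrary default if `s = ∅`). -/
noncomputable def topOf {α : Type*} (L : LinearOrder α) (s : Finset α) (d : α) : α :=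
  WithBot.unbotD d (@Finset.max α L s)

/-- The two least-preferred objects under `L`: those with at least two objects
strictly preferred to them. -/
noncomputable def bottomTwo (L : LinearOrder (Fin 4)) : Finset (Fin 4) :=
  Finset.univ.filter fun o => 2 ≤ (Finset.univ.filter fun o' => L.lt o o').card

/-- Two agents `0 = a1`, `1 = a2`; four objects.  `a1` gets her most-preferred
object; `a2` gets her most-preferred object among the two objects
least-preferred by `a1`. -/
noncomputable def phiTwo (P : Fin 2 → LinearOrder (Fin 4)) : Fin 2 → Fin 4 := fun a =>
  if a = 0 then topOf (P 0) Finset.univ 0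
  else topOf (P 1) (bottomTwo (P 0)) 0

/-! Each agent receives her favourite object from a menu that her own report does not
affect: `a1` chooses from all objects, `a2` from the bottom two of `a1`'s ranking. So no
report can get her anything better than truth-telling does. -/

section TopOf

variable {α : Type*} (L : LinearOrder α) {s : Finset α}

theorem topOf_eq_of_max_eq {m : α} (hm : @Finset.max α L s = m) (d : α) : topOf L s d = m := by
  rw [topOf, hm, WithBot.unbotD_coe]

theorem topOf_mem (hs : s.Nonempty) (d : α) : topOf L s d ∈ s := by
  obtain ⟨m, hm⟩ := @Finset.max_of_nonempty α L s hs
  rw [topOf_eq_of_max_eq L hm]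
  exact @Finset.mem_of_max α L s m hm

theorem le_topOf {a : α} (ha : a ∈ s) (d : α) : L.le a (topOf L s d) := by
  obtain ⟨m, hm⟩ := @Finset.max_of_nonempty α L s ⟨a, ha⟩
  rw [topOf_eq_of_max_eq L hm]
  exact @Finset.le_max_of_eq α L s a m ha hm

theorem topOf_le_topOf (Q : LinearOrder α) (hs : s.Nonempty) (d d' : α) :
    L.le (topOf Q s d') (topOf L s d) :=
  le_topOf L (topOf_mem Q hs d') d

end TopOf

theorem exists_card_filter_lt_eq {α : Type*} [LinearOrder α] [Fintype α] [Nonempty α] :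
    ∃ m : α, (Finset.univ.filter fun o => m < o).card = Fintype.card α - 1 := by
  obtain ⟨m, -, hm⟩ := (Finset.univ : Finset α).exists_min_image id Finset.univ_nonempty
  refine ⟨m, ?_⟩
  rw [← Finset.card_univ, ← Finset.card_erase_of_mem (Finset.mem_univ m)]
  congr 1
  ext o
  simpa [lt_iff_le_and_ne, eq_comm] using fun _ => hm o (Finset.mem_univ o)

theorem bottomTwo_nonempty (L : LinearOrder (Fin 4)) : (bottomTwo L).Nonempty := by
  obtain ⟨m, hm⟩ := @exists_card_filter_lt_eq (Fin 4) L _ _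
  refine ⟨m, Finset.mem_filter.2 ⟨Finset.mem_univ m, ?_⟩⟩
  rw [Fintype.card_fin] at hm
  exact hm.symm ▸ (by norm_num : 2 ≤ 4 - 1)

/-- The rule `φ` is strategy-proof. -/
theorem phiTwo_strategyProof : StrategyProof phiTwo := by
  intro P a Q
  fin_cases a
  · simp only [phiTwo, Fin.zero_eta, if_true, Function.update_self]
    exact topOf_le_topOf (P 0) Q Finset.univ_nonempty 0 0
  · simp only [phiTwo, Fin.mk_one, one_ne_zero, if_false, Function.update_self,
      Function.update_of_ne zero_ne_one]
    exact topOf_le_topOf (P 1) Q (bottomTwo_nonempty (P 0)) 0 0
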